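/- arXiv:0901.1587 — 4 statements merged into one kernel-verified Lean document; each statement's English description precedes it below -/
import Mathlib

section
/- For every positive definite quadratic form Q in d ≥ 1 variables, the arithmetical minimum satisfies λ(Q) ≤ (det Q)^{1/d} · (4/3)^{(d-1)/2}. -/
/-!
Hermite's argument. Let `x₀` be a minimal vector of `Q`. Minimality forces `x₀` to be primitive,
so it is the last vector of a basis of `ℤ^d`; in that basis `Q` has `λ` as bottom-right entry.
Completing the square in the last variable gives `Q[x', t] = λ (t + ℓ(x'))² + S[x']`, where `S` is
the Schur complement of that entry, and `det Q = λ det S`. Rounding `t` to the nearest integer to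
`-ℓ(x')` makes the first term at most `λ/4`, hence `S[y] ≥ 3λ/4` for all nonzero integral `y`.
Induction on `d` then yields `λ^d ≤ (4/3)^(d(d-1)/2) det Q`.
-/

open Matrix

/-- The real vector corresponding to an integral vector. -/
def castVec {d : ℕ} (x : Fin d → ℤ) : Fin d → ℝ := fun i => (x i : ℝ)

/-- Evaluation `Q[x] = xᵗ Q x` of a quadratic form at an integral vector. -/
def qeval {d : ℕ} (Q : Matrix (Fin d) (Fin d) ℝ) (x : Fin d → ℤ) : ℝ :=
  castVec x ⬝ᵥ Q.mulVec (castVec x)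

open Filter

section IntegralVectors
variable {d : ℕ}

lemma castVec_injective : Function.Injective (castVec : (Fin d → ℤ) → Fin d → ℝ) :=
  fun _ _ h => funext fun i => Int.cast_injective (congrFun h i)

lemma castVec_smul (g : ℤ) (x : Fin d → ℤ) : castVec (g • x) = (g : ℝ) • castVec x := by
  ext i; simp [castVec]

lemma castVec_eq_zero_iff {x : Fin d → ℤ} : castVec x = 0 ↔ x = 0 :=
  castVec_injective.eq_iff' (funext fun _ => Int.cast_zero)

lemma qeval_pos {Q : Matrix (Fin d) (Fin d) ℝ} (hQ : Q.PosDef) {x : Fin d → ℤ} (hx : x ≠ 0) :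
    0 < qeval Q x := by
  simpa [qeval] using hQ.dotProduct_mulVec_pos (castVec_eq_zero_iff.not.mpr hx)

lemma qeval_smul (Q : Matrix (Fin d) (Fin d) ℝ) (g : ℤ) (x : Fin d → ℤ) :
    qeval Q (g • x) = (g : ℝ) ^ 2 * qeval Q x := by
  simp only [qeval, castVec_smul, mulVec_smul, smul_dotProduct, dotProduct_smul, smul_eq_mul]
  ring

lemma qeval_single (Q : Matrix (Fin d) (Fin d) ℝ) (i : Fin d) :
    qeval Q (Pi.single i 1) = Q i i := by
  have : castVec (Pi.single i (1 : ℤ)) = Pi.single i 1 := by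
    ext j; by_cases h : j = i <;> simp [castVec, h]
  simp [qeval, this]

end IntegralVectors

lemma Matrix.PosDef.exists_pos_mul_sq_norm_le {ι : Type*} [Fintype ι]
    {Q : Matrix ι ι ℝ} (hQ : Q.PosDef) :
    ∃ m > 0, ∀ v : ι → ℝ, m * ‖v‖ ^ 2 ≤ v ⬝ᵥ Q *ᵥ v := by
  rcases isEmpty_or_nonempty ι with hι | hι
  · exact ⟨1, one_pos, fun v => by simp [Subsingleton.elim v 0]⟩
  have hcont : Continuous fun v : ι → ℝ => v ⬝ᵥ Q *ᵥ v := by fun_prop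
  obtain ⟨u, hu, hmin⟩ := (isCompact_sphere (0 : ι → ℝ) 1).exists_isMinOn
    (NormedSpace.sphere_nonempty.mpr zero_le_one) hcont.continuousOn
  have hu0 : u ≠ 0 := ne_zero_of_mem_unit_sphere ⟨u, hu⟩
  refine ⟨u ⬝ᵥ Q *ᵥ u, by simpa using hQ.dotProduct_mulVec_pos hu0, fun v => ?_⟩
  rcases eq_or_ne v 0 with rfl | hv
  · simp
  have hv' : ‖v‖ ≠ 0 := norm_ne_zero_iff.mpr hv
  have hw : ‖v‖⁻¹ • v ∈ Metric.sphere (0 : ι → ℝ) 1 := by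
    simp [norm_smul, hv']
  calc (u ⬝ᵥ Q *ᵥ u) * ‖v‖ ^ 2 ≤ ((‖v‖⁻¹ • v) ⬝ᵥ Q *ᵥ (‖v‖⁻¹ • v)) * ‖v‖ ^ 2 :=
        mul_le_mul_of_nonneg_right (hmin hw) (sq_nonneg _)
    _ = v ⬝ᵥ Q *ᵥ v := by
        simp only [mulVec_smul, smul_dotProduct, dotProduct_smul, smul_eq_mul]
        field_simp

lemma tendsto_qeval_cofinite_atTop {d : ℕ} {Q : Matrix (Fin d) (Fin d) ℝ} (hQ : Q.PosDef) :
    Tendsto (qeval Q) cofinite atTop := by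
  obtain ⟨m, hm, hle⟩ := hQ.exists_pos_mul_sq_norm_le
  have hnorm : Tendsto (fun x : Fin d → ℤ => ‖x‖) cofinite atTop := by
    simpa [cocompact_eq_cofinite] using tendsto_norm_cocompact_atTop (E := Fin d → ℤ)
  exact tendsto_atTop_mono (fun x => hle (castVec x))
    (((tendsto_pow_atTop two_ne_zero).comp hnorm).const_mul_atTop hm)

lemma exists_forall_qeval_le {d : ℕ} [NeZero d] {Q : Matrix (Fin d) (Fin d) ℝ} (hQ : Q.PosDef) :
    ∃ x ≠ 0, ∀ y ≠ 0, qeval Q x ≤ qeval Q y :=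
  (tendsto_qeval_cofinite_atTop hQ).exists_within_forall_le (s := {x | x ≠ 0})
    ⟨Pi.single 0 1, by simp⟩

section Primitive
variable {R : Type*} [CommRing R] [IsPrincipalIdealRing R]

lemma span_range_eq_top_of_forall_isUnit {ι : Type*} {x : ι → R}
    (h : ∀ (g : R) (y : ι → R), x = g • y → IsUnit g) : Ideal.span (Set.range x) = ⊤ := by
  obtain ⟨g, hg⟩ := (IsPrincipalIdealRing.principal (Ideal.span (Set.range x))).principal
  have hdvd : ∀ i, g ∣ x i := fun i => by
    rw [← Ideal.mem_span_singleton, ← Ideal.submodule_span_eq, ← hg]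
    exact Ideal.subset_span ⟨i, rfl⟩
  choose y hy using hdvd
  rw [hg, Ideal.submodule_span_eq, Ideal.span_singleton_eq_top]
  exact h g y (funext hy)

variable [IsDomain R]

lemma exists_linearEquiv_single_last {n : ℕ} {x : Fin (n + 1) → R}
    (hx : Ideal.span (Set.range x) = ⊤) :
    ∃ f : (Fin (n + 1) → R) ≃ₗ[R] (Fin (n + 1) → R), f (Pi.single (Fin.last n) 1) = x := by
  obtain ⟨c, hc⟩ := (Submodule.mem_span_range_iff_exists_fun R).mp
    (hx ▸ Submodule.mem_top : (1 : R) ∈ Ideal.span (Set.range x))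
  let φ : (Fin (n + 1) → R) →ₗ[R] R := ∑ i, c i • LinearMap.proj i
  have hφ : φ x = 1 := by simpa [φ] using hc
  obtain ⟨k, v, hv⟩ : ∃ k, ∃ v : Module.Basis (Fin (k + 1)) R (Fin (n + 1) → R),
      v (Fin.last k) = x := by
    refine ⟨_, Module.Basis.mkFinSnoc (Module.finBasis R (LinearMap.ker φ)) x ?_ ?_, ?_⟩
    · intro a y hy hay
      simpa [hφ, LinearMap.mem_ker.mp hy] using congrArg φ hay
    · exact fun z => ⟨-φ z, by simp [hφ]⟩
    · simp
  obtain rfl : k = n := by simpa using (Module.finrank_eq_card_basis v).symm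
  exact ⟨v.equivFun.symm, by simpa using hv⟩

end Primitive

lemma span_range_eq_top_of_forall_qeval_le {d : ℕ} {Q : Matrix (Fin d) (Fin d) ℝ}
    (hQ : Q.PosDef) {x : Fin d → ℤ} (hx : x ≠ 0) (hmin : ∀ y ≠ 0, qeval Q x ≤ qeval Q y) :
    Ideal.span (Set.range x) = ⊤ := by
  refine span_range_eq_top_of_forall_isUnit fun g y hxy => ?_
  subst hxy
  have hy : y ≠ 0 := by rintro rfl; simp at hx
  have hg : g ≠ 0 := by rintro rfl; simp at hx
  have hle := hmin y hy
  rw [qeval_smul] at hle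
  have hg2 : (g : ℝ) ^ 2 ≤ 1 := by nlinarith [qeval_pos hQ hy]
  have habs : |g| ≤ 1 := sq_le_one_iff_abs_le_one g |>.mp (by exact_mod_cast hg2)
  exact Int.isUnit_iff_abs_eq.mpr (le_antisymm habs (Int.one_le_abs hg))

section ChangeOfBasis
variable {d : ℕ}

noncomputable def intMatrix (f : (Fin d → ℤ) ≃ₗ[ℤ] (Fin d → ℤ)) : Matrix (Fin d) (Fin d) ℝ :=
  (LinearMap.toMatrix' (f : (Fin d → ℤ) →ₗ[ℤ] (Fin d → ℤ))).map (Int.cast : ℤ → ℝ)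

lemma intMatrix_mulVec_castVec (f : (Fin d → ℤ) ≃ₗ[ℤ] (Fin d → ℤ)) (y : Fin d → ℤ) :
    intMatrix f *ᵥ castVec y = castVec (f y) := by
  ext i
  change _ = (((f : (Fin d → ℤ) →ₗ[ℤ] (Fin d → ℤ)) y i : ℤ) : ℝ)
  rw [← LinearMap.toMatrix'_mulVec]
  exact ((Int.castRingHom ℝ).map_mulVec _ y i).symm

lemma sq_det_intMatrix (f : (Fin d → ℤ) ≃ₗ[ℤ] (Fin d → ℤ)) : (intMatrix f).det ^ 2 = 1 := by
  have : (intMatrix f).det = ((LinearMap.toMatrix' (f : (Fin d → ℤ) →ₗ[ℤ] _)).det : ℝ) :=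
    (RingHom.map_det (Int.castRingHom ℝ) _).symm
  rcases Int.isUnit_iff.mp (LinearEquiv.isUnit_det' f) with h | h <;> simp [this, h]

noncomputable def formComp (Q : Matrix (Fin d) (Fin d) ℝ) (f : (Fin d → ℤ) ≃ₗ[ℤ] (Fin d → ℤ)) :
    Matrix (Fin d) (Fin d) ℝ :=
  (intMatrix f)ᵀ * Q * intMatrix f

lemma qeval_formComp (Q : Matrix (Fin d) (Fin d) ℝ) (f : (Fin d → ℤ) ≃ₗ[ℤ] (Fin d → ℤ))
    (y : Fin d → ℤ) : qeval (formComp Q f) y = qeval Q (f y) := by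
  rw [qeval, qeval, formComp, ← mulVec_mulVec, ← mulVec_mulVec, dotProduct_mulVec,
    vecMul_transpose, intMatrix_mulVec_castVec]

lemma det_formComp (Q : Matrix (Fin d) (Fin d) ℝ) (f : (Fin d → ℤ) ≃ₗ[ℤ] (Fin d → ℤ)) :
    (formComp Q f).det = Q.det := by
  rw [formComp, det_mul, det_mul, det_transpose, mul_right_comm, ← sq, sq_det_intMatrix, one_mul]

lemma posDef_formComp {Q : Matrix (Fin d) (Fin d) ℝ} (hQ : Q.PosDef)
    (f : (Fin d → ℤ) ≃ₗ[ℤ] (Fin d → ℤ)) : (formComp Q f).PosDef := by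
  have hdet : IsUnit (intMatrix f).det :=
    isUnit_iff_ne_zero.mpr fun h => by simpa [h] using sq_det_intMatrix f
  simpa [formComp, conjTranspose_eq_transpose_of_trivial] using
    hQ.conjTranspose_mul_mul_same (mulVec_injective_of_isUnit ((isUnit_iff_isUnit_det _).mpr hdet))

end ChangeOfBasis

lemma exists_linearEquiv_forall_qeval_le {n : ℕ} {Q : Matrix (Fin (n + 1)) (Fin (n + 1)) ℝ}
    (hQ : Q.PosDef) : ∃ f : (Fin (n + 1) → ℤ) ≃ₗ[ℤ] (Fin (n + 1) → ℤ),
      ∀ y ≠ 0, qeval Q (f (Pi.single (Fin.last n) 1)) ≤ qeval Q y := by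
  obtain ⟨x, hx, hmin⟩ := exists_forall_qeval_le hQ
  obtain ⟨f, hf⟩ := exists_linearEquiv_single_last (span_range_eq_top_of_forall_qeval_le hQ hx hmin)
  exact ⟨f, hf ▸ hmin⟩

section Schur
variable {m n : Type*} [Fintype m] [Fintype n] [DecidableEq n]

lemma Matrix.PosDef.schur_complement₂₂ {A : Matrix m m ℝ} {B : Matrix m n ℝ} {D : Matrix n n ℝ}
    [Invertible D] (h : (fromBlocks A B Bᴴ D).PosDef) : (A - B * D⁻¹ * Bᴴ).PosDef := by
  have hD : D.IsHermitian := (isHermitian_fromBlocks_iff.mp h.1).2.2.2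
  refine .of_dotProduct_mulVec_pos ((IsHermitian.fromBlocks₂₂ A B hD).mp h.1) fun x hx => ?_
  -- at `(x, -D⁻¹Bᴴx)` the square in the `D`-block vanishes, leaving the Schur form at `x`
  have hxy : (x ⊕ᵥ -((D⁻¹ * Bᴴ) *ᵥ x)) ≠ 0 := fun h0 => hx (funext fun i => congrFun h0 (.inl i))
  have := h.dotProduct_mulVec_pos hxy
  rwa [dotProduct_mulVec, schur_complement_eq₂₂ A B _ _ hD, add_neg_cancel, dotProduct_zero,
    zero_add, ← dotProduct_mulVec] at this

lemma exists_int_fromBlocks_le (A : Matrix m m ℝ) (B : Matrix m (Fin 1) ℝ)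
    {D : Matrix (Fin 1) (Fin 1) ℝ} (hD : 0 < D 0 0) (y : m → ℝ) :
    ∃ k : ℤ, (y ⊕ᵥ fun _ => (k : ℝ)) ⬝ᵥ fromBlocks A B Bᴴ D *ᵥ (y ⊕ᵥ fun _ => (k : ℝ))
      ≤ D 0 0 / 4 + y ⬝ᵥ (A - B * D⁻¹ * Bᴴ) *ᵥ y := by
  have hDh : D.IsHermitian := by ext i j; fin_cases i; fin_cases j; rfl
  let := invertibleOfIsUnitDet D (by simpa [det_fin_one] using hD.ne')
  set t := ((D⁻¹ * Bᴴ) *ᵥ y) 0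
  refine ⟨-round t, ?_⟩
  have hsplit := schur_complement_eq₂₂ A B y (fun _ => ((-round t : ℤ) : ℝ)) hDh
  simp only [star_trivial, ← dotProduct_mulVec] at hsplit
  have hquad : ((D⁻¹ * Bᴴ) *ᵥ y + fun _ => ((-round t : ℤ) : ℝ)) ⬝ᵥ
      D *ᵥ ((D⁻¹ * Bᴴ) *ᵥ y + fun _ => ((-round t : ℤ) : ℝ)) = D 0 0 * (t - round t) ^ 2 := by
    simp [dotProduct, mulVec, t]
    ring
  have hround : (t - round t) ^ 2 ≤ 1 / 4 := by
    nlinarith [abs_sub_round t, abs_nonneg (t - round t), sq_abs (t - round t)]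
  rw [hsplit, hquad]
  nlinarith

end Schur

lemma Matrix.IsHermitian.eq_fromBlocks_toBlocks {m n : Type*} {M : Matrix (m ⊕ n) (m ⊕ n) ℝ}
    (hM : M.IsHermitian) :
    M = Matrix.fromBlocks M.toBlocks₁₁ M.toBlocks₁₂ M.toBlocks₁₂ᴴ M.toBlocks₂₂ := by
  have h₂₁ : M.toBlocks₂₁ = M.toBlocks₁₂ᴴ := by ext i j; exact (hM.apply _ _).symm
  conv_lhs => rw [← fromBlocks_toBlocks M, h₂₁]

section LastSchur
variable {n : ℕ}

noncomputable def lastSchur (R : Matrix (Fin (n + 1)) (Fin (n + 1)) ℝ) : Matrix (Fin n) (Fin n) ℝ :=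
  let M := R.submatrix finSumFinEquiv finSumFinEquiv
  M.toBlocks₁₁ - M.toBlocks₁₂ * M.toBlocks₂₂⁻¹ * M.toBlocks₁₂ᴴ

variable {R : Matrix (Fin (n + 1)) (Fin (n + 1)) ℝ}

lemma toBlocks₂₂_submatrix_finSumFinEquiv :
    (R.submatrix finSumFinEquiv finSumFinEquiv).toBlocks₂₂ 0 0 = R (Fin.last n) (Fin.last n) :=
  rfl

lemma isUnit_toBlocks₂₂_submatrix_finSumFinEquiv (hR : R.PosDef) :
    IsUnit (R.submatrix finSumFinEquiv finSumFinEquiv).toBlocks₂₂ := by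
  rw [isUnit_iff_isUnit_det, det_fin_one, toBlocks₂₂_submatrix_finSumFinEquiv]
  exact hR.diag_pos.ne'.isUnit

lemma det_eq_mul_det_lastSchur (hR : R.PosDef) :
    R.det = R (Fin.last n) (Fin.last n) * (lastSchur R).det := by
  let := (isUnit_toBlocks₂₂_submatrix_finSumFinEquiv hR).invertible
  rw [← det_submatrix_equiv_self finSumFinEquiv,
    (hR.1.submatrix finSumFinEquiv).eq_fromBlocks_toBlocks, det_fromBlocks₂₂, invOf_eq_nonsing_inv,
    det_fin_one, toBlocks₂₂_submatrix_finSumFinEquiv]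
  rfl

lemma posDef_lastSchur (hR : R.PosDef) : (lastSchur R).PosDef := by
  set M := R.submatrix finSumFinEquiv finSumFinEquiv
  have hM : M.PosDef := hR.submatrix finSumFinEquiv.injective
  let := (isUnit_toBlocks₂₂_submatrix_finSumFinEquiv hR).invertible
  rw [hM.1.eq_fromBlocks_toBlocks] at hM
  exact hM.schur_complement₂₂

lemma exists_qeval_le_lastSchur (hR : R.PosDef) {y : Fin n → ℤ} (hy : y ≠ 0) :
    ∃ z ≠ 0, qeval R z ≤ R (Fin.last n) (Fin.last n) / 4 + qeval (lastSchur R) y := by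
  have hM := (hR.1.submatrix finSumFinEquiv).eq_fromBlocks_toBlocks
  obtain ⟨k, hk⟩ := exists_int_fromBlocks_le _ _
    (toBlocks₂₂_submatrix_finSumFinEquiv (R := R) ▸ hR.diag_pos) (castVec y)
  refine ⟨(y ⊕ᵥ fun _ : Fin 1 => k) ∘ finSumFinEquiv.symm, ?_, ?_⟩
  · exact fun h => hy (funext fun i => by simpa using congrFun h (finSumFinEquiv (.inl i)))
  · have hz : castVec ((y ⊕ᵥ fun _ : Fin 1 => k) ∘ finSumFinEquiv.symm)
        = (castVec y ⊕ᵥ fun _ : Fin 1 => (k : ℝ)) ∘ finSumFinEquiv.symm := by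
      funext i
      simp only [castVec, Function.comp_apply]
      cases finSumFinEquiv.symm i <;> rfl
    rw [qeval, hz, comp_equiv_symm_dotProduct, ← submatrix_mulVec_equiv, hM]
    exact hk

end LastSchur

lemma exists_hermite_reduction {n : ℕ} {Q : Matrix (Fin (n + 1)) (Fin (n + 1)) ℝ}
    (hQ : Q.PosDef) :
    ∃ R : Matrix (Fin (n + 1)) (Fin (n + 1)) ℝ, R.PosDef ∧ R.det = Q.det ∧
      (∃ x ≠ 0, qeval Q x = R (Fin.last n) (Fin.last n)) ∧
      ∀ y ≠ 0, 3 / 4 * R (Fin.last n) (Fin.last n) ≤ qeval (lastSchur R) y := by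
  obtain ⟨f, hf⟩ := exists_linearEquiv_forall_qeval_le hQ
  have hR := posDef_formComp hQ f
  have ha : formComp Q f (Fin.last n) (Fin.last n) = qeval Q (f (Pi.single (Fin.last n) 1)) := by
    rw [← qeval_formComp, qeval_single]
  refine ⟨formComp Q f, hR, det_formComp Q f,
    ⟨_, (LinearEquiv.map_ne_zero_iff f).mpr (by simp), ha.symm⟩, fun y hy => ?_⟩
  obtain ⟨z, hz, hle⟩ := exists_qeval_le_lastSchur hR hy
  have hmin := hf (f z) ((LinearEquiv.map_ne_zero_iff f).mpr hz)
  rw [← ha, ← qeval_formComp] at hmin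
  linarith

noncomputable def hermiteBound (n : ℕ) : ℝ := (4 / 3 : ℝ) ^ (((n : ℝ) - 1) / 2)

lemma hermiteBound_succ_pow (n : ℕ) :
    hermiteBound (n + 1) ^ (n + 1) = (4 / 3) ^ n * hermiteBound n ^ n := by
  have h : (0 : ℝ) < 4 / 3 := by norm_num
  simp only [hermiteBound, ← Real.rpow_natCast, ← Real.rpow_mul h.le, ← Real.rpow_add h]
  congr 1
  push_cast
  ring

/- Stated for an arbitrary nonnegative lower bound `lam` of the nonzero values, so that the
induction can start at `n = 0`, where there are no nonzero integral vectors. -/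
theorem pow_le_hermiteBound_pow_mul_det : ∀ (n : ℕ) (Q : Matrix (Fin n) (Fin n) ℝ), Q.PosDef →
    ∀ lam : ℝ, 0 ≤ lam → (∀ x ≠ 0, lam ≤ qeval Q x) → lam ^ n ≤ hermiteBound n ^ n * Q.det
  | 0, Q, _, _, _, _ => by simp
  | n + 1, Q, hQ, lam, hlam0, hlam => by
    obtain ⟨R, hR, hdet, ⟨x, hx, hxa⟩, hS⟩ := exists_hermite_reduction hQ
    set a := R (Fin.last n) (Fin.last n)
    have hlam_le : lam ≤ a := hxa ▸ hlam x hx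
    have ha0 : 0 ≤ a := hlam0.trans hlam_le
    have ih := pow_le_hermiteBound_pow_mul_det n (lastSchur R) (posDef_lastSchur hR) (3 / 4 * a)
      (by positivity) hS
    have h43 : (4 / 3 : ℝ) ^ n * (3 / 4) ^ n = 1 := by rw [← mul_pow]; norm_num
    calc lam ^ (n + 1) ≤ a ^ (n + 1) := pow_le_pow_left₀ hlam0 hlam_le _
      _ = (4 / 3) ^ n * a * (3 / 4 * a) ^ n := by linear_combination (-a ^ (n + 1)) * h43
      _ ≤ (4 / 3) ^ n * a * (hermiteBound n ^ n * (lastSchur R).det) :=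
        mul_le_mul_of_nonneg_left ih (mul_nonneg (by positivity) ha0)
      _ = hermiteBound (n + 1) ^ (n + 1) * Q.det := by
        rw [hermiteBound_succ_pow, ← hdet, det_eq_mul_det_lastSchur hR]
        ring

theorem stmt0_general (d : ℕ) (Q : Matrix (Fin d) (Fin d) ℝ) (hQ : Q.PosDef)
    (lam : ℝ)
    (hlam : IsLeast {r : ℝ | ∃ x : Fin d → ℤ, x ≠ 0 ∧ qeval Q x = r} lam) :
    lam ≤ Q.det ^ ((1 : ℝ) / d) * (4 / 3 : ℝ) ^ (((d : ℝ) - 1) / 2) := by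
  obtain ⟨x, hx, rfl⟩ := hlam.1
  have hd : d ≠ 0 := by rintro rfl; exact hx (Subsingleton.elim _ _)
  have hpos := qeval_pos hQ hx
  have hpow := pow_le_hermiteBound_pow_mul_det d Q hQ _ hpos.le fun y hy => hlam.2 ⟨y, hy, rfl⟩
  have hb : 0 ≤ hermiteBound d := by unfold hermiteBound; positivity
  rw [one_div]
  calc qeval Q x = (qeval Q x ^ d) ^ (d⁻¹ : ℝ) := (Real.pow_rpow_inv_natCast hpos.le hd).symm
    _ ≤ (hermiteBound d ^ d * Q.det) ^ (d⁻¹ : ℝ) :=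
      Real.rpow_le_rpow (by positivity) hpow (by positivity)
    _ = Q.det ^ (d⁻¹ : ℝ) * hermiteBound d := by
      rw [Real.mul_rpow (by positivity) hQ.det_pos.le, Real.pow_rpow_inv_natCast hb hd, mul_comm]

/-- Hermite's theorem: for every positive definite quadratic form `Q` in `d ≥ 1`
variables with arithmetical minimum `lam`, one has
`lam ≤ (det Q)^(1/d) * (4/3)^((d-1)/2)`. -/
theorem stmt0 (d : ℕ) (hd : 1 ≤ d) (Q : Matrix (Fin d) (Fin d) ℝ) (hQ : Q.PosDef)
    (lam : ℝ)
    (hlam : IsLeast {r : ℝ | ∃ x : Fin d → ℤ, x ≠ 0 ∧ qeval Q x = r} lam) :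
    lam ≤ Q.det ^ ((1 : ℝ) / d) * (4 / 3 : ℝ) ^ (((d : ℝ) - 1) / 2) :=
  stmt0_general d Q hQ lam hlam
end

section
/- For every d ≥ 1 and every constant C > 0 there exists m = m(d, C) such that: for every positive definite quadratic form Q in d variables with λ(Q) ≥ 1 and trace Q ≤ C, every x ∈ ℤ^d with Q[x] ≤ 1 satisfies max_{i=1,…,d} |x_i| ≤ m. Equivalently, the set of x ∈ ℤ^d \ {0} for which Q[x] ≤ 1 for some such Q is finite. -/
/-!
Write `Q = Bᵀ B`, so that `v ↦ ‖B v‖` is a seminorm with `‖B v‖² = Q[v]` and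
`‖B eᵢ‖ = √Qᵢᵢ ≤ √C`. Fix `K > 2 d √C`. If `x` is integral with `Q[x] ≤ 1` and `n = |xᵢ| > 2 Kᵈ`,
Dirichlet's simultaneous approximation of `x / n` gives `1 ≤ s ≤ Kᵈ` and an integral `z` with
`‖s x - n z‖_∞ < n / K`. Then `‖B z‖ ≤ s / n + d √C / K < 1`, so `λ(Q) ≥ 1` forces `z = 0`;
but then `|s xᵢ| < n`, which is absurd.
-/

open Matrix

open scoped MatrixOrder in
theorem Matrix.PosSemidef.exists_linearMap_norm_sq_eq {n : Type*} [Fintype n]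
    {Q : Matrix n n ℝ} (hQ : Q.PosSemidef) :
    ∃ u : (n → ℝ) →ₗ[ℝ] EuclideanSpace ℝ n, ∀ v, ‖u v‖ ^ 2 = v ⬝ᵥ Q *ᵥ v := by
  classical
  obtain ⟨B, rfl⟩ := CStarAlgebra.nonneg_iff_eq_star_mul_self.mp hQ.nonneg
  refine ⟨(WithLp.linearEquiv 2 ℝ (n → ℝ)).symm.toLinearMap ∘ₗ B.mulVecLin, fun v => ?_⟩
  rw [EuclideanSpace.real_norm_sq_eq, ← mulVec_mulVec, dotProduct_mulVec, star_eq_conjTranspose,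
    vecMul_conjTranspose, star_trivial]
  simp [dotProduct, sq]

theorem norm_le_card_mul_mul_sqrt {n : Type*} [Fintype n] {Q : Matrix n n ℝ}
    {E : Type*} [SeminormedAddCommGroup E] [NormedSpace ℝ E] {u : (n → ℝ) →ₗ[ℝ] E}
    (hu : ∀ v, ‖u v‖ ^ 2 = v ⬝ᵥ Q *ᵥ v) {B C : ℝ} (hdiag : ∀ i, Q i i ≤ C)
    {w : n → ℝ} (hw : ∀ i, |w i| ≤ B) :
    ‖u w‖ ≤ Fintype.card n * B * √C := by
  classical
  have hbasis : ∀ i, ‖u (Pi.single i 1)‖ ≤ √C := fun i => by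
    rw [← Real.sqrt_sq (norm_nonneg _), hu]
    exact Real.sqrt_le_sqrt (by simpa [dotProduct, mulVec, Pi.single_apply] using hdiag i)
  calc ‖u w‖ = ‖∑ i, w i • u (Pi.single i 1)‖ := by
        conv_lhs => rw [← (Pi.basisFun ℝ n).sum_repr w]
        simp
    _ ≤ ∑ i, ‖w i • u (Pi.single i 1)‖ := norm_sum_le _ _
    _ ≤ ∑ _i : n, B * √C := Finset.sum_le_sum fun i _ => by
        rw [norm_smul, Real.norm_eq_abs]
        exact mul_le_mul (hw i) (hbasis i) (norm_nonneg _) ((abs_nonneg _).trans (hw i))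
    _ = Fintype.card n * B * √C := by simp [mul_assoc]

theorem Int.abs_sub_mul_lt_of_mul_ediv_eq {n K r r' : ℤ} (hn : 0 < n) (hK : 0 ≤ K)
    (h : r * K / n = r' * K / n) : |r - r'| * K < n := by
  have hdiv := Int.mul_ediv_add_emod (r * K) n
  have hdiv' := Int.mul_ediv_add_emod (r' * K) n
  have hmod := Int.emod_lt_of_pos (r * K) hn
  have hmod' := Int.emod_lt_of_pos (r' * K) hn
  have hmod0 := Int.emod_nonneg (r * K) hn.ne'
  have hmod0' := Int.emod_nonneg (r' * K) hn.ne'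
  rw [← abs_of_nonneg hK, ← abs_mul, abs_lt]
  constructor <;> nlinarith

theorem exists_nat_mul_sub_mul_lt {ι : Type*} [Fintype ι] (x : ι → ℤ) {n : ℤ} (hn : 0 < n)
    {K : ℕ} (hK : 0 < K) :
    ∃ s : ℕ, 0 < s ∧ s ≤ K ^ Fintype.card ι ∧ ∃ z : ι → ℤ, ∀ i, |s * x i - n * z i| * K < n := by
  classical
  set f : ℕ → ι → ℤ := fun k i => k * x i % n * K / n
  have hmaps : Set.MapsTo f (Finset.range (K ^ Fintype.card ι + 1))
      (Fintype.piFinset fun _ : ι => Finset.Ico 0 (K : ℤ) : Set (ι → ℤ)) := fun k _ => by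
    simp only [Fintype.coe_piFinset, Finset.coe_Ico, Set.mem_pi, Set.mem_univ, Set.mem_Ico,
      forall_const]
    intro i
    have hr0 := Int.emod_nonneg (k * x i) hn.ne'
    have hrn := Int.emod_lt_of_pos (k * x i) hn
    exact ⟨Int.ediv_nonneg (by positivity) hn.le, Int.ediv_lt_of_lt_mul hn (by nlinarith)⟩
  -- pigeonhole: `K ^ card ι + 1` multiples `k x`, but only `K ^ card ι` boxes for `k x mod n`
  obtain ⟨a, ha, b, hb, hab, hfab⟩ :=
    Finset.exists_ne_map_eq_of_card_lt_of_maps_to (by simp) hmaps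
  wlog hlt : a < b generalizing a b
  · exact this b hb a ha hab.symm hfab.symm (lt_of_le_of_ne (not_lt.mp hlt) hab.symm)
  rw [Finset.mem_range] at hb
  refine ⟨b - a, by omega, by omega, fun i => b * x i / n - a * x i / n, fun i => ?_⟩
  have hdiff : ((b - a : ℕ) : ℤ) * x i - n * (b * x i / n - a * x i / n)
      = b * x i % n - a * x i % n := by
    rw [Int.emod_def, Int.emod_def]; push_cast [Nat.cast_sub hlt.le]; ring
  rw [hdiff]
  exact Int.abs_sub_mul_lt_of_mul_ediv_eq hn (by positivity) (congrFun hfab i).symm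

theorem Matrix.PosSemidef.diag_le_trace {n : Type*} [Fintype n] {Q : Matrix n n ℝ}
    (hQ : Q.PosSemidef) (i : n) : Q i i ≤ Q.trace :=
  Finset.single_le_sum (f := Q.diag) (fun _ _ => hQ.diag_nonneg) (Finset.mem_univ i)

theorem finite_setOf_forall_abs_intCast_le {ι : Type*} [Finite ι] (m : ℝ) :
    {x : ι → ℤ | ∀ i, |(x i : ℝ)| ≤ m}.Finite := by
  refine (Set.Finite.pi fun _ => Set.finite_Icc (-⌈m⌉) ⌈m⌉).subset fun x hx i _ => ?_
  have hxm : |x i| ≤ ⌈m⌉ := by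
    exact_mod_cast (Int.cast_abs (R := ℝ) ▸ hx i).trans (Int.le_ceil m)
  exact abs_le.mp hxm

theorem qeval_lt_one_of_abs_mul_sub_mul_lt {d : ℕ} {C : ℝ} {Q : Matrix (Fin d) (Fin d) ℝ}
    (hQ : Q.PosSemidef) (hdiag : ∀ i, Q i i ≤ C) {K : ℕ} (hK : 2 * d * √C < K)
    {x z : Fin d → ℤ} (hx : qeval Q x ≤ 1) {n : ℤ} {s : ℕ} (hsn : 2 * (s : ℤ) < n)
    (hz : ∀ j, |s * x j - n * z j| * K < n) :
    qeval Q z < 1 := by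
  obtain ⟨u, hu⟩ := hQ.exists_linearMap_norm_sq_eq
  have hKR : (0 : ℝ) < K := (by positivity : (0 : ℝ) ≤ 2 * d * √C).trans_lt hK
  have hsR : 2 * (s : ℝ) < n := by exact_mod_cast hsn
  have hnR : (0 : ℝ) < n := by linarith [(Nat.cast_nonneg s : (0 : ℝ) ≤ s)]
  set e : Fin d → ℝ := fun j => ((s * x j - n * z j : ℤ) : ℝ)
  have hdecomp : (n : ℝ) • castVec z = (s : ℝ) • castVec x - e := by
    ext j; simp [e, castVec]
  have hux : ‖u (castVec x)‖ ≤ 1 :=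
    (sq_le_one_iff₀ (norm_nonneg _)).mp ((hu (castVec x)).trans_le hx)
  have he : ∀ j, |e j| ≤ n / K := fun j => by
    rw [le_div_iff₀ hKR, ← Int.cast_abs]
    exact_mod_cast (hz j).le
  have hue : ‖u e‖ ≤ d * (n / K) * √C := by
    simpa using norm_le_card_mul_mul_sqrt hu hdiag he
  have huz : (n : ℝ) * ‖u (castVec z)‖ < n * 1 := calc
    (n : ℝ) * ‖u (castVec z)‖ = ‖(s : ℝ) • u (castVec x) - u e‖ := by
      rw [← abs_of_pos hnR, ← Real.norm_eq_abs, ← norm_smul, ← map_smul, hdecomp, map_sub,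
        map_smul]
    _ ≤ s * ‖u (castVec x)‖ + ‖u e‖ := by
      simpa [norm_smul] using norm_sub_le ((s : ℝ) • u (castVec x)) (u e)
    _ ≤ s * 1 + n / 2 * (2 * d * √C / K) := by
      rw [show d * (n / K) * √C = n / 2 * (2 * d * √C / K) by field_simp] at hue
      gcongr
    _ < n / 2 + n / 2 := by
      gcongr ?_ + ?_
      · linarith
      · exact mul_lt_of_lt_one_right (by positivity) ((div_lt_one hKR).mpr hK)
    _ = n * 1 := by ring
  have huz1 : ‖u (castVec z)‖ < 1 := lt_of_mul_lt_mul_left huz hnR.le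
  rw [qeval, ← hu]
  exact (sq_lt_one_iff₀ (norm_nonneg _)).mpr huz1

theorem abs_le_of_qeval_le_one {d : ℕ} {C : ℝ} {Q : Matrix (Fin d) (Fin d) ℝ}
    (hQ : Q.PosSemidef) (hmin : ∀ y : Fin d → ℤ, y ≠ 0 → 1 ≤ qeval Q y)
    (hdiag : ∀ i, Q i i ≤ C) {K : ℕ} (hK : 2 * d * √C < K)
    {x : Fin d → ℤ} (hx : qeval Q x ≤ 1) (i : Fin d) :
    |(x i : ℝ)| ≤ 2 * K ^ d := by
  have hK0 : 0 < K := by exact_mod_cast (by positivity : 0 ≤ 2 * d * √C).trans_lt hK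
  by_contra! hbig
  set n : ℤ := |x i| with hn_def
  have hnK : 2 * (K : ℤ) ^ d < n := by rw [hn_def]; exact_mod_cast hbig
  have hn : 0 < n := lt_of_le_of_lt (by positivity) hnK
  obtain ⟨s, hs, hsK, z, hz⟩ := exists_nat_mul_sub_mul_lt x hn hK0
  rw [Fintype.card_fin] at hsK
  have hsn : 2 * (s : ℤ) < n := by
    have : (s : ℤ) ≤ K ^ d := by exact_mod_cast hsK
    linarith
  have hz0 : z = 0 := by
    by_contra hz0
    exact (hmin z hz0).not_gt (qeval_lt_one_of_abs_mul_sub_mul_lt hQ hdiag hK hx hsn hz)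
  have hlt := hz i
  simp only [hz0, Pi.zero_apply, mul_zero, sub_zero, abs_mul, Nat.abs_cast, ← hn_def] at hlt
  have h1 : n ≤ s * n := le_mul_of_one_le_left hn.le (by exact_mod_cast hs)
  have h2 : s * n ≤ s * n * K := le_mul_of_one_le_right (by positivity) (by exact_mod_cast hK0)
  linarith

theorem stmt4_general (d : ℕ) (C : ℝ) :
    (∃ m : ℝ, ∀ Q : Matrix (Fin d) (Fin d) ℝ, Q.PosDef →
      (∀ y : Fin d → ℤ, y ≠ 0 → 1 ≤ qeval Q y) → Q.trace ≤ C →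
      ∀ x : Fin d → ℤ, qeval Q x ≤ 1 → ∀ i, |(x i : ℝ)| ≤ m) ∧
    {x : Fin d → ℤ | x ≠ 0 ∧ ∃ Q : Matrix (Fin d) (Fin d) ℝ, Q.PosDef ∧
      (∀ y : Fin d → ℤ, y ≠ 0 → 1 ≤ qeval Q y) ∧ Q.trace ≤ C ∧ qeval Q x ≤ 1}.Finite := by
  obtain ⟨K, hK⟩ := exists_nat_gt (2 * d * √C)
  have hbound : ∀ Q : Matrix (Fin d) (Fin d) ℝ, Q.PosDef →
      (∀ y : Fin d → ℤ, y ≠ 0 → 1 ≤ qeval Q y) → Q.trace ≤ C →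
      ∀ x : Fin d → ℤ, qeval Q x ≤ 1 → ∀ i, |(x i : ℝ)| ≤ 2 * K ^ d :=
    fun Q hQ hmin htr _ hx => abs_le_of_qeval_le_one hQ.posSemidef hmin
      (fun j => (hQ.posSemidef.diag_le_trace j).trans htr) hK hx
  exact ⟨⟨_, hbound⟩, (finite_setOf_forall_abs_intCast_le _).subset
    fun x ⟨_, Q, hQ, hmin, htr, hx⟩ => hbound Q hQ hmin htr x hx⟩

/-- For every `d ≥ 1` and `C > 0` there is a bound `m` such that every
positive definite quadratic form `Q` with arithmetical minimum at least `1` and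
trace at most `C` has all integral vectors `x` with `Q[x] ≤ 1` bounded in
absolute coordinates by `m`; equivalently, the set of nonzero integral vectors
`x` with `Q[x] ≤ 1` for some such `Q` is finite. -/
theorem stmt4 (d : ℕ) (hd : 1 ≤ d) (C : ℝ) (hC : 0 < C) :
    (∃ m : ℝ, ∀ Q : Matrix (Fin d) (Fin d) ℝ, Q.PosDef →
      (∀ y : Fin d → ℤ, y ≠ 0 → 1 ≤ qeval Q y) → Q.trace ≤ C →
      ∀ x : Fin d → ℤ, qeval Q x ≤ 1 → ∀ i, |(x i : ℝ)| ≤ m) ∧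
    {x : Fin d → ℤ | x ≠ 0 ∧ ∃ Q : Matrix (Fin d) (Fin d) ℝ, Q.PosDef ∧
      (∀ y : Fin d → ℤ, y ≠ 0 → 1 ≤ qeval Q y) ∧ Q.trace ≤ C ∧ qeval Q x ≤ 1}.Finite :=
  stmt4_general d C
end

section
/- For every d ≥ 1 and every constant C > 0, the set {Q ∈ S^d_{>0} : λ(Q) ≥ 1 and trace Q ≤ C} is a polytope, i.e., it equals the convex hull of a finite set of real symmetric d×d matrices (possibly empty). -/
/-!
If `Q` is symmetric and `Q[x] ≥ 1` at the nonzero integral `x` of the box `|xᵢ| ≤ K := 2 N ^ d`,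
with `N` large in terms of `d` and a bound `C` on the entries of `Q`, then every eigenvalue of `Q`
is at least `1 / K ^ 2`. Indeed, by Dirichlet's simultaneous approximation a unit eigenvector `u`
with eigenvalue `λ` has a multiple `q • u`, `1 ≤ q ≤ N ^ d`, within `1 / N` of an integral vector
`x` of the box, and then `1 ≤ Q[x] ≤ 2 max(λ, 0) N ^ (2 d) + 1 / 2`. So such a `Q` is positive
definite with `Q[x] ≥ |x| ^ 2 / K ^ 2 ≥ 1` outside the box: the set of the theorem is cut out by
finitely many linear inequalities. They bound the entries by the trace, so the set is a compact
polyhedron, and by Krein–Milman it is the convex hull of its finitely many extreme points.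
-/

open Matrix

open Set Filter Topology

lemma exists_nat_int_abs_mul_sub_lt {ι : Type*} [Fintype ι] (u : ι → ℝ) {N : ℕ} (hN : 0 < N) :
    ∃ (q : ℕ) (x : ι → ℤ), 0 < q ∧ q ≤ N ^ Fintype.card ι ∧ ∀ i, |q * u i - x i| < 1 / N := by
  classical
  have hN' : (0 : ℝ) < N := by exact_mod_cast hN
  -- Pigeonhole: `N ^ card ι + 1` fractional parts `Int.fract (q • u)` in `N ^ card ι` cubes.
  let g : Fin (N ^ Fintype.card ι + 1) → ι → Fin N := fun q i =>
    ⟨⌊N * Int.fract ((q : ℕ) * u i)⌋₊, (Nat.floor_lt (by positivity)).2 <| by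
      nlinarith [Int.fract_lt_one ((q : ℕ) * u i)]⟩
  obtain ⟨q₁, q₂, hne, hg⟩ := Fintype.exists_ne_map_eq_of_card_lt g (by simp)
  wlog hlt : q₁ < q₂ generalizing q₁ q₂
  · exact this q₂ q₁ hne.symm hg.symm (lt_of_le_of_ne (not_lt.1 hlt) hne.symm)
  refine ⟨q₂ - q₁, fun i => ⌊((q₂ : ℕ) : ℝ) * u i⌋ - ⌊((q₁ : ℕ) : ℝ) * u i⌋, by omega, by omega,
    fun i => ?_⟩
  have hfloor :
      ⌊N * Int.fract (((q₂ : ℕ) : ℝ) * u i)⌋ = ⌊N * Int.fract (((q₁ : ℕ) : ℝ) * u i)⌋ := by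
    have := congrArg Fin.val (congrFun hg i)
    simp only [g] at this
    rw [← Int.natCast_floor_eq_floor (by positivity), ← Int.natCast_floor_eq_floor (by positivity),
      this]
  have hsub : ((q₂ - q₁ : ℕ) : ℝ) * u i - (⌊((q₂ : ℕ) : ℝ) * u i⌋ - ⌊((q₁ : ℕ) : ℝ) * u i⌋ : ℤ) =
      Int.fract (((q₂ : ℕ) : ℝ) * u i) - Int.fract (((q₁ : ℕ) : ℝ) * u i) := by
    rw [Nat.cast_sub hlt.le, Int.fract, Int.fract]
    push_cast
    ring
  rw [hsub, lt_div_iff₀ hN', ← abs_of_pos hN', ← abs_mul, sub_mul, mul_comm, mul_comm _ (N : ℝ)]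
  exact Int.abs_sub_lt_one_of_floor_eq_floor hfloor

section Polyhedron

variable {E : Type*} [AddCommGroup E] [Module ℝ E]

def IsPolyhedron (P : Set E) : Prop :=
  ∃ H : Set (Module.Dual ℝ E × ℝ), H.Finite ∧ P = {x | ∀ h ∈ H, h.1 x ≤ h.2}

lemma isPolyhedron_setOf_le (f : Module.Dual ℝ E) (c : ℝ) : IsPolyhedron {x | f x ≤ c} :=
  ⟨{(f, c)}, finite_singleton _, by simp⟩

lemma isPolyhedron_setOf_ge (f : Module.Dual ℝ E) (c : ℝ) : IsPolyhedron {x | c ≤ f x} := by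
  simpa using isPolyhedron_setOf_le (-f) (-c)

lemma IsPolyhedron.inter {P P' : Set E} (hP : IsPolyhedron P) (hP' : IsPolyhedron P') :
    IsPolyhedron (P ∩ P') := by
  obtain ⟨H, hH, rfl⟩ := hP
  obtain ⟨H', hH', rfl⟩ := hP'
  refine ⟨H ∪ H', hH.union hH', ?_⟩
  ext x
  simp [or_imp, forall_and]

lemma IsPolyhedron.biInter {ι : Type*} {s : Set ι} (hs : s.Finite) {P : ι → Set E}
    (hP : ∀ i ∈ s, IsPolyhedron (P i)) : IsPolyhedron (⋂ i ∈ s, P i) := by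
  choose! H hH hPH using hP
  refine ⟨⋃ i ∈ s, H i, hs.biUnion hH, ?_⟩
  rw [iInter₂_congr hPH]
  ext x
  simp only [mem_iInter, mem_iUnion, mem_ofPred_eq, exists_prop, forall_exists_index, and_imp]
  exact ⟨fun hx h i hi hh => hx i hi h hh, fun hx i hi h hh => hx h i hi hh⟩

lemma IsPolyhedron.convex {P : Set E} (hP : IsPolyhedron P) : Convex ℝ P := by
  obtain ⟨H, -, rfl⟩ := hP
  simp only [ofPred_forall]
  exact convex_iInter₂ fun h _ => convex_halfSpace_le h.1.isLinear h.2

lemma eq_of_mem_extremePoints_of_active_subset {H : Set (Module.Dual ℝ E × ℝ)} (hH : H.Finite)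
    {x y : E} (hx : x ∈ {x | ∀ h ∈ H, h.1 x ≤ h.2}.extremePoints ℝ)
    (hy : y ∈ {x | ∀ h ∈ H, h.1 x ≤ h.2}) (hxy : ∀ h ∈ H, h.1 x = h.2 → h.1 y = h.2) :
    y = x := by
  -- `x` lies strictly between `y` and the points `z t` just beyond `x`, which stay in the
  -- polyhedron: the constraints active at `x` are constant along the line through `x` and `y`.
  set z : ℝ → E := fun t => (1 + t) • x - t • y
  have hz : ∀ᶠ t in 𝓝 0, ∀ h ∈ H, h.1 (z t) ≤ h.2 := by
    refine (eventually_all_finite hH).2 fun h hh => ?_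
    have hzt : ∀ t, h.1 (z t) = h.1 x + t * (h.1 x - h.1 y) := fun t => by
      simp only [z, map_sub, map_smul, smul_eq_mul]; ring
    rcases (hx.1 h hh).eq_or_lt with hact | hlt
    · exact Eventually.of_forall fun t => by rw [hzt, hact, hxy h hh hact]; simp
    · have hcont : Continuous fun t : ℝ => h.1 x + t * (h.1 x - h.1 y) := by fun_prop
      filter_upwards [hcont.continuousAt.eventually_lt continuousAt_const (by simpa using hlt)]
        with t ht
      exact (hzt t).le.trans ht.le
  obtain ⟨t, ht, ht0⟩ := ((hz.filter_mono nhdsWithin_le_nhds).and self_mem_nhdsWithin).exists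
    (f := 𝓝[>] (0 : ℝ))
  have hseg : x ∈ openSegment ℝ y (z t) := by
    refine ⟨t / (1 + t), 1 / (1 + t), by positivity, by positivity, by field_simp; ring, ?_⟩
    simp only [z, smul_sub, smul_smul]
    have : 1 + t ≠ 0 := by positivity
    field_simp
    module
  exact hx.2 hy ht hseg

lemma IsPolyhedron.finite_extremePoints {P : Set E} (hP : IsPolyhedron P) :
    (P.extremePoints ℝ).Finite := by
  obtain ⟨H, hH, rfl⟩ := hP
  refine Finite.of_finite_image (f := fun x => {h ∈ H | h.1 x = h.2})
    (hH.finite_subsets.subset ?_) fun x hx y hy hxy => ?_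
  · rintro _ ⟨x, -, rfl⟩ h hh
    exact hh.1
  · exact (eq_of_mem_extremePoints_of_active_subset hH hx hy.1 fun h hh hact =>
      ((Set.ext_iff.1 hxy h).1 ⟨hh, hact⟩).2).symm

lemma IsPolyhedron.isClosed [TopologicalSpace E] [IsTopologicalAddGroup E] [ContinuousSMul ℝ E]
    [T2Space E] [FiniteDimensional ℝ E] {P : Set E} (hP : IsPolyhedron P) : IsClosed P := by
  obtain ⟨H, -, rfl⟩ := hP
  simp only [ofPred_forall]
  exact isClosed_biInter fun h _ =>
    isClosed_le (LinearMap.continuous_of_finiteDimensional h.1) continuous_const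

lemma IsPolyhedron.convexHull_extremePoints [TopologicalSpace E] [T2Space E]
    [IsTopologicalAddGroup E] [ContinuousSMul ℝ E] [LocallyConvexSpace ℝ E] {P : Set E}
    (hP : IsPolyhedron P) (hc : IsCompact P) : convexHull ℝ (P.extremePoints ℝ) = P := by
  rw [← (hP.finite_extremePoints.isClosed_convexHull ℝ).closure_eq]
  exact closure_convexHull_extremePoints hc hP.convex

end Polyhedron

section

variable {n : Type*} [Fintype n]

lemma abs_dotProduct_le {a b : n → ℝ} {α β : ℝ} (ha : ∀ i, |a i| ≤ α) (hb : ∀ i, |b i| ≤ β) :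
    |a ⬝ᵥ b| ≤ Fintype.card n * (α * β) := by
  calc |a ⬝ᵥ b| ≤ ∑ i, |a i * b i| := Finset.abs_sum_le_sum_abs _ _
    _ ≤ ∑ _i : n, α * β := Finset.sum_le_sum fun i _ => by
        rw [abs_mul]; exact mul_le_mul (ha i) (hb i) (abs_nonneg _) ((abs_nonneg _).trans (ha i))
    _ = Fintype.card n * (α * β) := by simp

lemma abs_dotProduct_mulVec_self_le {Q : Matrix n n ℝ} {C α : ℝ} (hQ : ∀ i j, |Q i j| ≤ C)
    {v : n → ℝ} (hv : ∀ i, |v i| ≤ α) :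
    |v ⬝ᵥ Q *ᵥ v| ≤ Fintype.card n ^ 2 * (C * α ^ 2) := by
  have hQv : ∀ i, |(Q *ᵥ v) i| ≤ Fintype.card n * (C * α) := fun i => abs_dotProduct_le (hQ i) hv
  calc |v ⬝ᵥ Q *ᵥ v| ≤ Fintype.card n * (α * (Fintype.card n * (C * α))) := abs_dotProduct_le hv hQv
    _ = Fintype.card n ^ 2 * (C * α ^ 2) := by ring

lemma abs_le_one_of_dotProduct_self_eq_one {u : n → ℝ} (hu : u ⬝ᵥ u = 1) (i : n) : |u i| ≤ 1 := by
  rw [← sq_le_one_iff_abs_le_one, ← hu, dotProduct, sq]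
  exact Finset.single_le_sum (f := fun j => u j * u j) (fun j _ => mul_self_nonneg _)
    (Finset.mem_univ i)

lemma dotProduct_mulVec_smul_add {Q : Matrix n n ℝ} (hQ : Q.IsSymm) {u : n → ℝ} {c : ℝ}
    (hu : Q *ᵥ u = c • u) (q : ℝ) (e : n → ℝ) :
    (q • u + e) ⬝ᵥ Q *ᵥ (q • u + e) = c * (q ^ 2 * (u ⬝ᵥ u) + 2 * q * (u ⬝ᵥ e)) + e ⬝ᵥ Q *ᵥ e := by
  have hue : u ⬝ᵥ Q *ᵥ e = c * (u ⬝ᵥ e) := by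
    rw [dotProduct_mulVec, ← mulVec_transpose, hQ.eq, hu, smul_dotProduct, smul_eq_mul]
  simp only [mulVec_add, mulVec_smul, hu, add_dotProduct, dotProduct_add, smul_dotProduct,
    dotProduct_smul, hue, smul_eq_mul, dotProduct_comm e u]
  ring

lemma Matrix.IsHermitian.mul_dotProduct_self_le [DecidableEq n]
    {Q : Matrix n n ℝ} (hQ : Q.IsHermitian) {μ : ℝ}
    (h : ∀ (u : n → ℝ) (c : ℝ), u ⬝ᵥ u = 1 → Q *ᵥ u = c • u → μ ≤ c) (v : n → ℝ) :
    μ * (v ⬝ᵥ v) ≤ v ⬝ᵥ Q *ᵥ v := by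
  have hA : (Q - μ • 1).IsHermitian := hQ.sub (isHermitian_one.smul (IsSelfAdjoint.all μ))
  have hpsd : (Q - μ • 1).PosSemidef := by
    refine hA.posSemidef_iff_eigenvalues_nonneg.2 fun i => ?_
    set b := (hA.eigenvectorBasis i).ofLp
    have hb : b ⬝ᵥ b = 1 := by
      have := EuclideanSpace.inner_eq_star_dotProduct (hA.eigenvectorBasis i)
        (hA.eigenvectorBasis i)
      rw [real_inner_self_eq_norm_sq, hA.eigenvectorBasis.orthonormal.1 i] at this
      simpa [b] using this.symm
    have hQb : Q *ᵥ b = (hA.eigenvalues i + μ) • b := by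
      have := hA.mulVec_eigenvectorBasis i
      rw [sub_mulVec, smul_mulVec, one_mulVec, sub_eq_iff_eq_add] at this
      rw [this, add_smul]
    simpa using h b _ hb hQb
  have := (posSemidef_iff_dotProduct_mulVec.1 hpsd).2 v
  simp only [star_trivial, sub_mulVec, smul_mulVec, one_mulVec, dotProduct_sub, dotProduct_smul,
    smul_eq_mul] at this
  linarith

end

lemma Matrix.isSymm_iff_forall_le {n α : Type*} [PartialOrder α] {Q : Matrix n n α} :
    Q.IsSymm ↔ ∀ i j, Q i j ≤ Q j i :=
  ⟨fun h i j => (h.apply j i).le, fun h => IsSymm.ext fun i j => le_antisymm (h j i) (h i j)⟩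

instance Matrix.instLocallyConvexSpace {m n : Type*} : LocallyConvexSpace ℝ (Matrix m n ℝ) :=
  inferInstanceAs (LocallyConvexSpace ℝ (m → n → ℝ))

lemma qeval_single_add_single {d : ℕ} (Q : Matrix (Fin d) (Fin d) ℝ) (i j : Fin d) (ε : ℤ) :
    qeval Q (Pi.single i 1 + Pi.single j ε) = Q i i + ε * (Q i j + Q j i) + ε ^ 2 * Q j j := by
  have : castVec (Pi.single i 1 + Pi.single j ε) = Pi.single i 1 + (ε : ℝ) • Pi.single j 1 := by
    ext k
    simp only [castVec, Pi.add_apply, Pi.smul_apply, Pi.single_apply]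
    split_ifs <;> simp
  simp only [qeval, this, mulVec_add, mulVec_smul, mulVec_single_one, add_dotProduct,
    dotProduct_add, smul_dotProduct, dotProduct_smul, single_one_dotProduct, col_apply, smul_eq_mul]
  ring

-- The bound `2` allows the test vector `Pi.single i 1 + Pi.single j 1` also when `i = j`.
lemma abs_apply_le_trace {d : ℕ} {Q : Matrix (Fin d) (Fin d) ℝ} (hQ : Q.IsSymm)
    (h : ∀ x : Fin d → ℤ, (∀ i, |x i| ≤ 2) → 0 ≤ qeval Q x) (i j : Fin d) : |Q i j| ≤ Q.trace := by
  have hpair : ∀ k l (ε : ℤ), |ε| ≤ 1 → 0 ≤ Q k k + ε * (Q k l + Q l k) + ε ^ 2 * Q l l := by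
    intro k l ε hε
    rw [← qeval_single_add_single]
    refine h _ fun m => (abs_add_le _ _).trans ?_
    have h1 : |(Pi.single k 1 : Fin d → ℤ) m| ≤ 1 := by rw [Pi.single_apply]; split_ifs <;> simp
    have h2 : |(Pi.single l ε : Fin d → ℤ) m| ≤ 1 := by
      rw [Pi.single_apply]; split_ifs <;> simp [hε]
    linarith
  have hdiag : ∀ k, Q k k ≤ Q.trace := fun k =>
    Finset.single_le_sum (f := fun k => Q k k) (fun k _ => by simpa using hpair k k 0 (by simp))
      (Finset.mem_univ k)
  have hp := hpair i j 1 (by simp)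
  have hm := hpair i j (-1) (by simp)
  push_cast at hp hm
  rw [hQ.apply i j] at hp hm
  rw [abs_le]
  constructor <;> linarith [hdiag i, hdiag j]

lemma exists_castVec_eq_smul_add {d N : ℕ} (hN : 0 < N) (hNd : 2 * d ≤ N) {u : Fin d → ℝ}
    (hu : u ⬝ᵥ u = 1) :
    ∃ (q : ℕ) (x : Fin d → ℤ) (e : Fin d → ℝ), 0 < q ∧ q ≤ N ^ d ∧ x ≠ 0 ∧
      (∀ i, |x i| ≤ 2 * N ^ d) ∧ castVec x = (q : ℝ) • u + e ∧ ∀ i, |e i| ≤ 1 / N := by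
  obtain ⟨q, x, hq0, hqN, hx⟩ := exists_nat_int_abs_mul_sub_lt u hN
  rw [Fintype.card_fin] at hqN
  have hN' : (1 : ℝ) ≤ N := by exact_mod_cast hN
  have hu_le := abs_le_one_of_dotProduct_self_eq_one hu
  set e := castVec x - (q : ℝ) • u with he
  have he_le : ∀ i, |e i| ≤ 1 / N := fun i => by
    simpa [he, castVec, abs_sub_comm] using (hx i).le
  refine ⟨q, x, e, hq0, hqN, ?_, fun i => ?_, by rw [he, add_sub_cancel], he_le⟩
  · rintro rfl
    have hu_small : ∀ i, |u i| ≤ 1 / N := fun i => by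
      have hq1 : (1 : ℝ) ≤ q := by exact_mod_cast hq0
      have := hx i
      simp only [Pi.zero_apply, Int.cast_zero, sub_zero, abs_mul, Nat.abs_cast] at this
      nlinarith [abs_nonneg (u i)]
    have := abs_dotProduct_le hu_small hu_small
    rw [hu, Fintype.card_fin, abs_one] at this
    field_simp at this
    have hNd' : (2 * d : ℝ) ≤ N := by exact_mod_cast hNd
    nlinarith
  · have hxi : (x i : ℝ) = q * u i + e i := by simp [he, castVec]
    have hqN' : (q : ℝ) ≤ N ^ d := by exact_mod_cast hqN
    have hN1 : (1 : ℝ) / N ≤ 1 := by rw [div_le_one (by positivity)]; exact hN'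
    have hqu : |q * u i| ≤ q := by
      rw [abs_mul, Nat.abs_cast]; exact mul_le_of_le_one_right (by positivity) (hu_le i)
    have : |(x i : ℝ)| ≤ 2 * N ^ d := by
      rw [hxi]
      linarith [abs_add_le (q * u i) (e i), he_le i, one_le_pow₀ (n := d) hN']
    exact_mod_cast this

lemma one_div_sq_le_of_mulVec_eq_smul {d N : ℕ} {C c : ℝ} {Q : Matrix (Fin d) (Fin d) ℝ}
    (hQ : Q.IsSymm) (hQC : ∀ i j, |Q i j| ≤ C) (hN : 0 < N) (hNd : 2 * d ≤ N)
    (hNC : 2 * C * d ^ 2 ≤ N ^ 2)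
    (h : ∀ x : Fin d → ℤ, x ≠ 0 → (∀ i, |x i| ≤ 2 * N ^ d) → 1 ≤ qeval Q x)
    {u : Fin d → ℝ} (hu : u ⬝ᵥ u = 1) (hQu : Q *ᵥ u = c • u) :
    1 / (2 * N ^ d) ^ 2 ≤ c := by
  by_contra! hc
  obtain ⟨q, x, e, hq0, hqN, hx0, hx_box, hxe, he_le⟩ := exists_castVec_eq_smul_add hN hNd hu
  have hN' : (0 : ℝ) < N := by exact_mod_cast hN
  have hNd' : (2 * d : ℝ) ≤ N := by exact_mod_cast hNd
  have hq1 : (1 : ℝ) ≤ q := by exact_mod_cast hq0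
  have hqN' : (q : ℝ) ≤ N ^ d := by exact_mod_cast hqN
  have hue : |u ⬝ᵥ e| ≤ 1 / 2 := by
    refine (abs_dotProduct_le (abs_le_one_of_dotProduct_self_eq_one hu) he_le).trans ?_
    rw [Fintype.card_fin, one_mul, ← div_eq_mul_one_div, div_le_iff₀ hN']
    linarith
  have hee : e ⬝ᵥ Q *ᵥ e ≤ 1 / 2 := by
    refine (le_abs_self _).trans ((abs_dotProduct_mulVec_self_le hQC he_le).trans ?_)
    rw [Fintype.card_fin, div_pow, one_pow, mul_one_div, ← mul_div_assoc,
      div_le_iff₀ (by positivity)]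
    linarith
  have hmain : c * (q ^ 2 + 2 * q * (u ⬝ᵥ e)) < 1 / 2 := by
    have hF0 : 0 ≤ (q : ℝ) ^ 2 + 2 * q * (u ⬝ᵥ e) := by nlinarith [abs_le.1 hue]
    have hF : (q : ℝ) ^ 2 + 2 * q * (u ⬝ᵥ e) ≤ 2 * (N ^ d) ^ 2 := by nlinarith [abs_le.1 hue]
    rcases le_or_gt c 0 with hc0 | hc0
    · nlinarith
    · calc c * (q ^ 2 + 2 * q * (u ⬝ᵥ e)) ≤ c * (2 * (N ^ d) ^ 2) :=
            mul_le_mul_of_nonneg_left hF hc0.le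
        _ < 1 / (2 * N ^ d) ^ 2 * (2 * (N ^ d) ^ 2) := mul_lt_mul_of_pos_right hc (by positivity)
        _ = 1 / 2 := by field_simp
  have := h x hx0 hx_box
  rw [qeval, hxe, dotProduct_mulVec_smul_add hQ hQu, hu] at this
  linarith

@[simps]
def qevalLinearMap {d : ℕ} (x : Fin d → ℤ) : Module.Dual ℝ (Matrix (Fin d) (Fin d) ℝ) where
  toFun Q := qeval Q x
  map_add' A B := by simp [qeval, add_mulVec, dotProduct_add]
  map_smul' c A := by simp [qeval, smul_mulVec, dotProduct_smul]

def truncatedRyshkov (d : ℕ) (K : ℤ) (C : ℝ) : Set (Matrix (Fin d) (Fin d) ℝ) :=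
  {Q | Q.IsSymm ∧ (∀ x : Fin d → ℤ, x ≠ 0 → (∀ i, |x i| ≤ K) → 1 ≤ qeval Q x) ∧ Q.trace ≤ C}

section truncatedRyshkov

variable {d : ℕ} {K : ℤ} {C : ℝ}

lemma isPolyhedron_truncatedRyshkov (d : ℕ) (K : ℤ) (C : ℝ) :
    IsPolyhedron (truncatedRyshkov d K C) := by
  set X : Set (Fin d → ℤ) := {x | x ≠ 0 ∧ ∀ i, |x i| ≤ K}
  have hX : X.Finite :=
    (Finite.pi fun _ => finite_Icc (-K) K).subset fun x hx i _ => abs_le.1 (hx.2 i)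
  have heq : truncatedRyshkov d K C =
      (⋂ p ∈ (univ : Set (Fin d × Fin d)),
        {Q | (entryLinearMap ℝ ℝ p.1 p.2 - entryLinearMap ℝ ℝ p.2 p.1) Q ≤ 0}) ∩
      (⋂ x ∈ X, {Q | 1 ≤ qevalLinearMap x Q}) ∩ {Q | traceLinearMap (Fin d) ℝ ℝ Q ≤ C} := by
    ext Q
    simp [truncatedRyshkov, isSymm_iff_forall_le, X, and_assoc]
  rw [heq]
  exact ((IsPolyhedron.biInter finite_univ fun p _ => isPolyhedron_setOf_le _ 0).inter
    (IsPolyhedron.biInter hX fun x _ => isPolyhedron_setOf_ge _ 1)).inter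
    (isPolyhedron_setOf_le _ C)

lemma abs_apply_le_of_mem_truncatedRyshkov (hK : 2 ≤ K) {Q : Matrix (Fin d) (Fin d) ℝ}
    (hQ : Q ∈ truncatedRyshkov d K C) (i j : Fin d) : |Q i j| ≤ C := by
  obtain ⟨hsymm, hmin, htr⟩ := hQ
  refine (abs_apply_le_trace hsymm (fun x hx => ?_) i j).trans htr
  rcases eq_or_ne x 0 with rfl | hx0
  · simp [qeval, castVec, dotProduct]
  · exact zero_le_one.trans (hmin x hx0 fun i => (hx i).trans hK)

lemma isCompact_truncatedRyshkov (hK : 2 ≤ K) : IsCompact (truncatedRyshkov d K C) :=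
  (isCompact_univ_pi fun _ => isCompact_univ_pi fun _ => isCompact_Icc (a := -C) (b := C))
    |>.of_isClosed_subset (isPolyhedron_truncatedRyshkov d K C).isClosed
      fun _ hQ i _ j _ => abs_le.1 (abs_apply_le_of_mem_truncatedRyshkov hK hQ i j)

lemma mul_dotProduct_self_le_of_mem_truncatedRyshkov {N : ℕ} (hN : 0 < N) (hNd : 2 * d ≤ N)
    (hNC : 2 * C * d ^ 2 ≤ N ^ 2) {Q : Matrix (Fin d) (Fin d) ℝ}
    (hQ : Q ∈ truncatedRyshkov d (2 * N ^ d) C) (v : Fin d → ℝ) :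
    1 / (2 * N ^ d) ^ 2 * (v ⬝ᵥ v) ≤ v ⬝ᵥ Q *ᵥ v := by
  have hK : (2 : ℤ) ≤ 2 * N ^ d := le_mul_of_one_le_right two_pos.le (one_le_pow₀ (by omega))
  have hQC := abs_apply_le_of_mem_truncatedRyshkov hK hQ
  obtain ⟨hsymm, hmin, -⟩ := hQ
  exact (isHermitian_iff_isSymm.2 hsymm).mul_dotProduct_self_le
    (fun u c hu hQu => one_div_sq_le_of_mulVec_eq_smul hsymm hQC hN hNd hNC hmin hu hQu) v

lemma setOf_posDef_eq_truncatedRyshkov {N : ℕ} (hN : 0 < N) (hNd : 2 * d ≤ N)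
    (hNC : 2 * C * d ^ 2 ≤ N ^ 2) :
    {Q : Matrix (Fin d) (Fin d) ℝ | Q.PosDef ∧
      (∀ x : Fin d → ℤ, x ≠ 0 → 1 ≤ qeval Q x) ∧ Q.trace ≤ C} =
      truncatedRyshkov d (2 * N ^ d) C := by
  ext Q
  refine ⟨fun ⟨hpos, hmin, htr⟩ =>
    ⟨isHermitian_iff_isSymm.1 hpos.isHermitian, fun x hx _ => hmin x hx, htr⟩, fun hQ => ?_⟩
  have hμ := mul_dotProduct_self_le_of_mem_truncatedRyshkov hN hNd hNC hQ
  obtain ⟨hsymm, hmin, htr⟩ := hQ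
  refine ⟨posDef_iff_dotProduct_mulVec.2 ⟨isHermitian_iff_isSymm.2 hsymm, fun v hv => ?_⟩,
    fun x hx => ?_, htr⟩
  · rw [star_trivial]
    exact (mul_pos (by positivity) (by simpa using dotProduct_star_self_pos_iff.2 hv)).trans_le
      (hμ v)
  by_cases hbox : ∀ i, |x i| ≤ 2 * N ^ d
  · exact hmin x hx hbox
  obtain ⟨i, hi⟩ : ∃ i, 2 * N ^ d < |x i| := by simpa using hbox
  have hxi : (2 * N ^ d : ℝ) ≤ |(x i : ℝ)| := by exact_mod_cast hi.le
  have hxx : (x i : ℝ) ^ 2 ≤ castVec x ⬝ᵥ castVec x := by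
    rw [dotProduct, sq]
    exact Finset.single_le_sum (f := fun j => castVec x j * castVec x j)
      (fun j _ => mul_self_nonneg _) (Finset.mem_univ i)
  calc (1 : ℝ) = 1 / (2 * N ^ d) ^ 2 * (2 * N ^ d) ^ 2 := by field_simp
    _ ≤ 1 / (2 * N ^ d) ^ 2 * (castVec x ⬝ᵥ castVec x) := by
        gcongr
        exact (pow_le_pow_left₀ (by positivity) hxi 2).trans ((sq_abs _).trans_le hxx)
    _ ≤ qeval Q x := hμ _

end truncatedRyshkov

theorem stmt5_general (d : ℕ) (C : ℝ) :
    ∃ F : Set (Matrix (Fin d) (Fin d) ℝ), F.Finite ∧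
      {Q : Matrix (Fin d) (Fin d) ℝ | Q.PosDef ∧
          (∀ x : Fin d → ℤ, x ≠ 0 → 1 ≤ qeval Q x) ∧ Q.trace ≤ C}
        = convexHull ℝ F := by
  obtain ⟨N, hN, hNd, hNC⟩ : ∃ N : ℕ, 0 < N ∧ 2 * d ≤ N ∧ 2 * C * d ^ 2 ≤ N ^ 2 := by
    refine ⟨2 * d + 1 + ⌈2 * C * d ^ 2⌉₊, by omega, by omega, ?_⟩
    have := Nat.le_ceil (2 * C * d ^ 2)
    push_cast
    nlinarith [(⌈2 * C * d ^ 2⌉₊.cast_nonneg : (0 : ℝ) ≤ _), (d.cast_nonneg : (0 : ℝ) ≤ d)]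
  have hK : (2 : ℤ) ≤ 2 * N ^ d := le_mul_of_one_le_right two_pos.le (one_le_pow₀ (by omega))
  have hP := isPolyhedron_truncatedRyshkov d (2 * N ^ d) C
  refine ⟨_, hP.finite_extremePoints, ?_⟩
  rw [setOf_posDef_eq_truncatedRyshkov hN hNd hNC,
    hP.convexHull_extremePoints (isCompact_truncatedRyshkov hK)]

/-- For every `d ≥ 1` and `C > 0`, the set of positive definite quadratic forms
with arithmetical minimum at least `1` and trace at most `C` is a polytope,
i.e. the convex hull of a finite set of symmetric matrices. -/
theorem stmt5 (d : ℕ) (hd : 1 ≤ d) (C : ℝ) (hC : 0 < C) :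
    ∃ F : Set (Matrix (Fin d) (Fin d) ℝ), F.Finite ∧
      {Q : Matrix (Fin d) (Fin d) ℝ | Q.PosDef ∧
          (∀ x : Fin d → ℤ, x ≠ 0 → 1 ≤ qeval Q x) ∧ Q.trace ≤ C}
        = convexHull ℝ F :=
  stmt5_general d C
end

section
/- (Hermite reduction) For every positive definite quadratic form Q in d variables there exists U ∈ GL_d(ℤ) such that the equivalent form Q' = UᵗQU satisfies ∏_{i=1}^d q'_{ii} ≤ (4/3)^{d(d−1)/2} · det Q', where q'_{ii} are the diagonal entries of Q'. -/
open Matrix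

/-- The real matrix corresponding to an integral matrix. -/
def castMat {d : ℕ} (U : Matrix (Fin d) (Fin d) ℤ) : Matrix (Fin d) (Fin d) ℝ :=
  U.map fun z => (z : ℝ)

/-!
Hermite's induction on `d`. A minimal nonzero lattice vector of `Q` is an integer multiple of
a vector of some lattice basis, and that basis vector is then minimal as well; taking it as the
first basis vector makes `q₁₁ = min Q`. Completing the square,
`Q[(t, y)] = q₁₁ (t + ℓ(y) / q₁₁)² + S[y]` and `det Q = q₁₁ det S` for the Schur complement `S`
of `q₁₁`. Rounding `-ℓ(y) / q₁₁` to an integer `t` gives `Q[(t, y)] ≤ q₁₁ / 4 + S[y]`, so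
minimality yields `S[y] ≥ (3/4) q₁₁` on nonzero integral `y`. Reduce `S` by induction with `V`,
and lift `V` to `[[1, k], [0, V]]` with the rounded `kⱼ` for the columns of `V`: the new
diagonal entries are `≤ q₁₁ / 4 + S[Vⱼ] ≤ (4/3) S[Vⱼ]`, which accounts for the extra factor
`(4/3)^(d-1)`.
-/

open Filter Module

namespace Hermite

variable {n : ℕ}

section Lattice

theorem exists_basis_smul_eq {R M ι : Type*} [CommRing R] [IsDomain R] [IsPrincipalIdealRing R]
    [AddCommGroup M] [Module R M] [Finite ι] (b : Basis ι R M) {v : M} (hv : v ≠ 0) :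
    ∃ (b' : Basis ι R M) (i : ι) (m : R), m • b' i = v := by
  obtain ⟨n, bM, bN, f, a, snf⟩ := (R ∙ v).smithNormalForm b
  have hn : n ≤ 1 := by
    simpa [finrank_eq_card_basis bN] using finrank_span_le_card (R := R) ({v} : Set M)
  have hv' := congrArg Subtype.val (bN.sum_repr ⟨v, Submodule.mem_span_singleton_self v⟩)
  obtain ⟨k⟩ : Nonempty (Fin n) := by
    by_contra h
    simp [not_nonempty_iff.1 h] at hv'
    exact hv hv'.symm
  have : Subsingleton (Fin n) := Fin.subsingleton_iff_le_one.2 hn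
  refine ⟨bM, f k, bN.repr ⟨v, Submodule.mem_span_singleton_self v⟩ k * a k, ?_⟩
  rw [Fintype.sum_subsingleton _ k] at hv'
  simpa [snf, mul_smul] using hv'

variable {ι : Type*} [Fintype ι] {Q : Matrix ι ι ℝ}

theorem tendsto_dotProduct_mulVec_cocompact (hQ : Q.PosDef) :
    Tendsto (fun x => x ⬝ᵥ Q *ᵥ x) (cocompact (ι → ℝ)) atTop := by
  have hcont : Continuous fun x : ι → ℝ => x ⬝ᵥ Q *ᵥ x := by fun_prop
  obtain ⟨m, hm, hbound⟩ : ∃ m > 0, ∀ x : ι → ℝ, m * ‖x‖ ^ 2 ≤ x ⬝ᵥ Q *ᵥ x := by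
    cases isEmpty_or_nonempty ι
    · exact ⟨1, one_pos, fun x => by simp [Subsingleton.elim x 0]⟩
    obtain ⟨x₀, hx₀, hmin⟩ := (isCompact_sphere (0 : ι → ℝ) 1).exists_isMinOn
      (NormedSpace.sphere_nonempty.2 zero_le_one) hcont.continuousOn
    have hx₀ne : x₀ ≠ 0 := ne_zero_of_mem_unit_sphere ⟨x₀, hx₀⟩
    refine ⟨_, by simpa using hQ.dotProduct_mulVec_pos hx₀ne, fun x => ?_⟩
    rcases eq_or_ne x 0 with rfl | hx
    · simp
    have h : x₀ ⬝ᵥ Q *ᵥ x₀ ≤ (‖x‖⁻¹ • x) ⬝ᵥ Q *ᵥ (‖x‖⁻¹ • x) :=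
      hmin (by simp [norm_smul, hx])
    rw [mulVec_smul, dotProduct_smul, smul_dotProduct, smul_eq_mul, smul_eq_mul, ← mul_assoc,
      ← sq, inv_pow, le_inv_mul_iff₀ (by positivity)] at h
    linarith
  exact tendsto_atTop_mono hbound
    (((tendsto_pow_atTop two_ne_zero).comp tendsto_norm_cocompact_atTop).const_mul_atTop hm)

theorem exists_forall_ne_zero_dotProduct_mulVec_le [Nonempty ι] (hQ : Q.PosDef) :
    ∃ v : ι → ℤ, v ≠ 0 ∧ ∀ x : ι → ℤ, x ≠ 0 →
      (Int.cast ∘ v) ⬝ᵥ Q *ᵥ (Int.cast ∘ v) ≤ (Int.cast ∘ x) ⬝ᵥ Q *ᵥ (Int.cast ∘ x) := by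
  classical
  have hcast : Tendsto (fun x : ι → ℤ => (Int.cast ∘ x : ι → ℝ)) cofinite (cocompact _) := by
    rw [← coprodᵢ_cofinite, ← coprodᵢ_cocompact]
    exact Tendsto.pi_map_coprodᵢ fun _ => Int.tendsto_coe_cofinite
  exact ((tendsto_dotProduct_mulVec_cocompact hQ).comp hcast).exists_within_forall_le
    (s := {x | x ≠ 0}) ⟨Pi.single (Classical.arbitrary ι) 1, by simp⟩

end Lattice

section castMat

variable {d : ℕ} (U : Matrix (Fin d) (Fin d) ℤ)

theorem castMat_mul (V : Matrix (Fin d) (Fin d) ℤ) : castMat (U * V) = castMat U * castMat V :=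
  Matrix.map_mul (f := Int.castRingHom ℝ)

theorem det_castMat : (castMat U).det = U.det :=
  ((Int.castRingHom ℝ).map_det U).symm

theorem castMat_mulVec (x : Fin d → ℤ) : castMat U *ᵥ (Int.cast ∘ x) = Int.cast ∘ (U *ᵥ x) := by
  ext i
  simp [castMat, mulVec, dotProduct]

variable (M : Matrix (Fin d) (Fin d) ℝ)

theorem transpose_castMat_mul_mul_apply (i j : Fin d) :
    ((castMat U)ᵀ * M * castMat U) i j = (Int.cast ∘ Uᵀ i) ⬝ᵥ M *ᵥ (Int.cast ∘ Uᵀ j) :=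
  mul_mul_apply _ _ _ _ _

theorem dotProduct_transpose_castMat_mul_mul_mulVec (x : Fin d → ℤ) :
    (Int.cast ∘ x) ⬝ᵥ ((castMat U)ᵀ * M * castMat U) *ᵥ (Int.cast ∘ x) =
      (Int.cast ∘ (U *ᵥ x)) ⬝ᵥ M *ᵥ (Int.cast ∘ (U *ᵥ x)) := by
  rw [← mulVec_mulVec, ← mulVec_mulVec, dotProduct_mulVec, vecMul_transpose, castMat_mulVec]

variable {U}

theorem det_transpose_castMat_mul_mul (hU : IsUnit U.det) :
    ((castMat U)ᵀ * M * castMat U).det = M.det := by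
  rw [det_mul, det_mul, det_transpose, det_castMat, mul_right_comm, ← Int.cast_mul,
    Int.isUnit_mul_self hU, Int.cast_one, one_mul]

theorem isUnit_castMat (hU : IsUnit U.det) : IsUnit (castMat U) := by
  rw [isUnit_iff_isUnit_det, det_castMat]
  exact hU.map (Int.castRingHom ℝ)

theorem _root_.Matrix.PosDef.transpose_castMat_mul_mul {M : Matrix (Fin d) (Fin d) ℝ}
    (hM : M.PosDef) (hU : IsUnit U.det) : ((castMat U)ᵀ * M * castMat U).PosDef := by
  simpa [conjTranspose_eq_transpose_of_trivial] using
    hM.conjTranspose_mul_mul_same (mulVec_injective_of_isUnit (isUnit_castMat hU))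

end castMat

def IsFirstVectorMinimal (R : Matrix (Fin (n + 1)) (Fin (n + 1)) ℝ) : Prop :=
  ∀ x : Fin (n + 1) → ℤ, x ≠ 0 → R 0 0 ≤ (Int.cast ∘ x) ⬝ᵥ R *ᵥ (Int.cast ∘ x)

theorem exists_isUnit_det_isFirstVectorMinimal {Q : Matrix (Fin (n + 1)) (Fin (n + 1)) ℝ}
    (hQ : Q.PosDef) : ∃ U : Matrix (Fin (n + 1)) (Fin (n + 1)) ℤ, IsUnit U.det ∧
      IsFirstVectorMinimal ((castMat U)ᵀ * Q * castMat U) := by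
  obtain ⟨v, hv, hmin⟩ := exists_forall_ne_zero_dotProduct_mulVec_le hQ
  obtain ⟨b, i, m, rfl⟩ := exists_basis_smul_eq (Pi.basisFun ℤ (Fin (n + 1))) hv
  set U := (Pi.basisFun ℤ _).toMatrix (b.reindex (Equiv.swap i 0))
  have hU : IsUnit U.det := by
    simpa only [Basis.det_apply] using (Pi.basisFun ℤ _).isUnit_det (b.reindex (Equiv.swap i 0))
  have hcol : Uᵀ 0 = b i := by
    ext k
    simp [U, Basis.toMatrix_apply]
  refine ⟨U, hU, fun x hx => ?_⟩
  have hm : (1 : ℝ) ≤ (m : ℝ) ^ 2 := by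
    have : m ≠ 0 := by rintro rfl; simp at hv
    exact_mod_cast (one_le_sq_iff_one_le_abs _).2 (Int.one_le_abs this)
  rw [transpose_castMat_mul_mul_apply, hcol, dotProduct_transpose_castMat_mul_mul_mulVec]
  calc (Int.cast ∘ b i) ⬝ᵥ Q *ᵥ (Int.cast ∘ b i)
      ≤ (m : ℝ) ^ 2 * (Int.cast ∘ b i) ⬝ᵥ Q *ᵥ (Int.cast ∘ b i) :=
        le_mul_of_one_le_left (hQ.posSemidef.dotProduct_mulVec_nonneg _) hm
    _ = (Int.cast ∘ (m • b i)) ⬝ᵥ Q *ᵥ (Int.cast ∘ (m • b i)) := by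
        have hsmul : (Int.cast ∘ (m • b i) : Fin (n + 1) → ℝ) = (m : ℝ) • (Int.cast ∘ b i) := by
          ext
          simp
        rw [hsmul, mulVec_smul, dotProduct_smul, smul_dotProduct, smul_eq_mul, smul_eq_mul,
          ← mul_assoc, sq]
    _ ≤ _ := hmin _ <| by
        simpa using (mulVec_injective_of_isUnit ((isUnit_iff_isUnit_det U).2 hU)).ne hx

theorem det_eq_mul_det_submatrix_succ {α : Type*} [CommRing α]
    (A : Matrix (Fin (n + 1)) (Fin (n + 1)) α) (hA : ∀ i : Fin n, A i.succ 0 = 0) :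
    A.det = A 0 0 * (A.submatrix Fin.succ Fin.succ).det := by
  simp [det_succ_column_zero A, Fin.sum_univ_succ, hA]

section SchurComplement

variable {K : Type*} [Field K]

def schurComplementZero (R : Matrix (Fin (n + 1)) (Fin (n + 1)) K) : Matrix (Fin n) (Fin n) K :=
  of fun i j => R i.succ j.succ - R i.succ 0 * R 0 j.succ / R 0 0

theorem det_eq_mul_det_schurComplementZero (R : Matrix (Fin (n + 1)) (Fin (n + 1)) K)
    (ha : R 0 0 ≠ 0) : R.det = R 0 0 * (schurComplementZero R).det := by
  set c : Fin (n + 1) → K := Fin.cons 0 fun i : Fin n => R i.succ 0 / R 0 0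
  let B : Matrix (Fin (n + 1)) (Fin (n + 1)) K := of fun i j => R i j - c i * R 0 j
  have hB0 : ∀ j, B 0 j = R 0 j := fun j => by simp [B, c]
  rw [det_eq_of_forall_row_eq_smul_add_const (A := R) (B := B) c 0 rfl fun i j => by
      simp [hB0, B],
    det_eq_mul_det_submatrix_succ B fun i => by simp [B, c, ha], hB0]
  congr 2
  ext i j
  simp [B, c, schurComplementZero]
  ring

theorem dotProduct_mulVec_cons (R : Matrix (Fin (n + 1)) (Fin (n + 1)) K) (hR : R.IsSymm)
    (ha : R 0 0 ≠ 0) (t : K) (y : Fin n → K) :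
    Fin.cons t y ⬝ᵥ R *ᵥ Fin.cons t y =
      R 0 0 * (t + (fun j => R 0 j.succ) ⬝ᵥ y / R 0 0) ^ 2 + y ⬝ᵥ schurComplementZero R *ᵥ y := by
  have hsymm : ∀ i : Fin n, R i.succ 0 = R 0 i.succ := fun i => by
    simpa using congrFun₂ hR.eq 0 i.succ
  simp only [dotProduct, mulVec, Fin.sum_univ_succ, Fin.cons_zero, Fin.cons_succ,
    schurComplementZero, of_apply, hsymm, sub_mul, Finset.sum_sub_distrib, mul_add, mul_sub,
    Finset.sum_add_distrib, Finset.mul_sum]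
  have hcross : ∑ i, y i * (R 0 i.succ * t) = ∑ i, t * (R 0 i.succ * y i) :=
    Finset.sum_congr rfl fun i _ => by ring
  have hsq : ∑ i, ∑ j, y i * (R 0 i.succ * R 0 j.succ / R 0 0 * y j) =
      (∑ i, R 0 i.succ * y i) ^ 2 / R 0 0 := by
    simp only [sq, Finset.sum_mul_sum, Finset.sum_div]
    exact Finset.sum_congr rfl fun i _ => Finset.sum_congr rfl fun j _ => by ring
  rw [hcross, hsq, ← Finset.mul_sum]
  field_simp
  ring

end SchurComplement

theorem _root_.Matrix.PosDef.schurComplementZero {R : Matrix (Fin (n + 1)) (Fin (n + 1)) ℝ}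
    (hR : R.PosDef) : (schurComplementZero R).PosDef := by
  have hsymm : R.IsSymm := by simpa using hR.isHermitian
  have ha : 0 < R 0 0 := hR.diag_pos
  refine .of_dotProduct_mulVec_pos ?_ fun y hy => ?_
  · rw [isHermitian_iff_isSymm]
    refine IsSymm.ext fun i j => ?_
    simp only [Hermite.schurComplementZero, of_apply, hsymm.apply]
    ring
  · have h := hR.dotProduct_mulVec_pos
      (x := Fin.cons (-((fun j => R 0 j.succ) ⬝ᵥ y / R 0 0)) y)
      fun h => hy (funext fun i => by simpa using congrFun h i.succ)
    rw [star_trivial, dotProduct_mulVec_cons R hsymm ha.ne'] at h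
    simpa using h

theorem exists_int_dotProduct_mulVec_cons_le (R : Matrix (Fin (n + 1)) (Fin (n + 1)) ℝ)
    (hR : R.IsSymm) (ha : 0 < R 0 0) (y : Fin n → ℝ) :
    ∃ k : ℤ, Fin.cons (k : ℝ) y ⬝ᵥ R *ᵥ Fin.cons (k : ℝ) y ≤
      R 0 0 / 4 + y ⬝ᵥ schurComplementZero R *ᵥ y := by
  set s := -((fun j => R 0 j.succ) ⬝ᵥ y / R 0 0)
  refine ⟨round s, ?_⟩
  rw [dotProduct_mulVec_cons R hR ha.ne', show (round s : ℝ) + _ / R 0 0 = round s - s by ring]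
  have h : ((round s : ℝ) - s) ^ 2 ≤ 1 / 4 := by
    rw [← sq_abs, abs_sub_comm]
    nlinarith [abs_sub_round s, abs_nonneg (s - round s)]
  nlinarith

theorem three_quarters_le_dotProduct_schurComplementZero
    {R : Matrix (Fin (n + 1)) (Fin (n + 1)) ℝ} (hR : R.IsSymm) (ha : 0 < R 0 0)
    (hmin : IsFirstVectorMinimal R) {y : Fin n → ℤ} (hy : y ≠ 0) :
    3 / 4 * R 0 0 ≤ (Int.cast ∘ y) ⬝ᵥ schurComplementZero R *ᵥ (Int.cast ∘ y) := by
  obtain ⟨k, hk⟩ := exists_int_dotProduct_mulVec_cons_le R hR ha (Int.cast ∘ y)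
  have h := hmin (Fin.cons k y) fun h => hy (funext fun i => by simpa using congrFun h i.succ)
  rw [Fin.comp_cons] at h
  linarith

/-- The block matrix `[[1, k], [0, V]]`. -/
def cornerExtension {α : Type*} [Zero α] [One α] (k : Fin n → α) (V : Matrix (Fin n) (Fin n) α) :
    Matrix (Fin (n + 1)) (Fin (n + 1)) α :=
  of (Fin.cons (Fin.cons 1 k) fun i => Fin.cons 0 (V i))

theorem det_cornerExtension {α : Type*} [CommRing α] (k : Fin n → α)
    (V : Matrix (Fin n) (Fin n) α) : (cornerExtension k V).det = V.det := by
  rw [det_eq_mul_det_submatrix_succ _ fun i => rfl]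
  exact one_mul V.det

theorem transpose_cornerExtension_zero {α : Type*} [Zero α] [One α] (k : Fin n → α)
    (V : Matrix (Fin n) (Fin n) α) : (cornerExtension k V)ᵀ 0 = Fin.cons 1 0 := by
  ext l
  cases l using Fin.cases <;> rfl

theorem transpose_cornerExtension_succ {α : Type*} [Zero α] [One α] (k : Fin n → α)
    (V : Matrix (Fin n) (Fin n) α) (j : Fin n) :
    (cornerExtension k V)ᵀ j.succ = Fin.cons (k j) (Vᵀ j) := by
  ext l
  cases l using Fin.cases <;> rfl

def HermiteInequality {d : ℕ} (M : Matrix (Fin d) (Fin d) ℝ) : Prop :=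
  ∏ i, M i i ≤ (4 / 3 : ℝ) ^ (d * (d - 1) / 2) * M.det

theorem exists_hermiteInequality_of_schurComplementZero
    {R : Matrix (Fin (n + 1)) (Fin (n + 1)) ℝ} (hR : R.PosDef)
    (hmin : IsFirstVectorMinimal R) {V : Matrix (Fin n) (Fin n) ℤ} (hV : IsUnit V.det)
    (hVS : HermiteInequality ((castMat V)ᵀ * schurComplementZero R * castMat V)) :
    ∃ W : Matrix (Fin (n + 1)) (Fin (n + 1)) ℤ, IsUnit W.det ∧
      HermiteInequality ((castMat W)ᵀ * R * castMat W) := by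
  have hsymm : R.IsSymm := by simpa using hR.isHermitian
  have ha : 0 < R 0 0 := hR.diag_pos
  set G := (castMat V)ᵀ * schurComplementZero R * castMat V with hG
  choose k hk using fun j => exists_int_dotProduct_mulVec_cons_le R hsymm ha (Int.cast ∘ Vᵀ j)
  set W := cornerExtension k V
  have hW : IsUnit W.det := by rwa [det_cornerExtension]
  refine ⟨W, hW, ?_⟩
  set F := (castMat W)ᵀ * R * castMat W with hF
  have hF0 : F 0 0 = R 0 0 := by
    rw [hF, transpose_castMat_mul_mul_apply, transpose_cornerExtension_zero, Fin.comp_cons,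
      dotProduct_mulVec_cons R hsymm ha.ne']
    simp
  have hFsucc : ∀ j, F j.succ j.succ ≤ 4 / 3 * G j j := by
    intro j
    have hVj : Vᵀ j ≠ 0 := fun h => not_isUnit_zero <|
      det_eq_zero_of_column_eq_zero j (fun i => congrFun h i) ▸ hV
    have h34 := three_quarters_le_dotProduct_schurComplementZero hsymm ha hmin hVj
    rw [hF, hG, transpose_castMat_mul_mul_apply, transpose_cornerExtension_succ, Fin.comp_cons,
      transpose_castMat_mul_mul_apply]
    linarith [hk j]
  have hdet : F.det = R 0 0 * G.det := by
    rw [det_transpose_castMat_mul_mul _ hW, det_transpose_castMat_mul_mul _ hV,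
      det_eq_mul_det_schurComplementZero R ha.ne']
  have hFdiag : ∀ i, 0 ≤ F i i := fun i => (hR.transpose_castMat_mul_mul hW).diag_pos.le
  unfold HermiteInequality at hVS ⊢
  calc ∏ i, F i i = F 0 0 * ∏ j : Fin n, F j.succ j.succ := Fin.prod_univ_succ _
    _ ≤ R 0 0 * ∏ j, (4 / 3 * G j j) := by
        rw [hF0]
        exact mul_le_mul_of_nonneg_left
          (Finset.prod_le_prod (fun j _ => hFdiag _) fun j _ => hFsucc j) ha.le
    _ = R 0 0 * (4 / 3) ^ n * ∏ j, G j j := by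
        rw [Finset.prod_mul_distrib, Finset.prod_const, Finset.card_univ, Fintype.card_fin,
          mul_assoc]
    _ ≤ R 0 0 * (4 / 3) ^ n * ((4 / 3) ^ (n * (n - 1) / 2) * G.det) := by gcongr
    _ = (4 / 3) ^ ((n + 1) * (n + 1 - 1) / 2) * F.det := by
        rw [Nat.triangle_succ, hdet, pow_add]
        ring

theorem exists_isUnit_det_hermiteInequality :
    ∀ {d : ℕ} {Q : Matrix (Fin d) (Fin d) ℝ}, Q.PosDef →
      ∃ U : Matrix (Fin d) (Fin d) ℤ, IsUnit U.det ∧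
        HermiteInequality ((castMat U)ᵀ * Q * castMat U)
  | 0, _, _ => ⟨1, by simp, by simp [HermiteInequality]⟩
  | n + 1, Q, hQ => by
    obtain ⟨U₀, hU₀, hmin⟩ := exists_isUnit_det_isFirstVectorMinimal hQ
    have hR := hQ.transpose_castMat_mul_mul hU₀
    obtain ⟨V, hV, hVS⟩ := exists_isUnit_det_hermiteInequality hR.schurComplementZero
    obtain ⟨W, hW, hWR⟩ := exists_hermiteInequality_of_schurComplementZero hR hmin hV hVS
    refine ⟨U₀ * W, by rw [det_mul]; exact hU₀.mul hW, ?_⟩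
    rw [castMat_mul, transpose_mul]
    simpa only [Matrix.mul_assoc] using hWR

end Hermite

/-- Hermite reduction: every positive definite quadratic form `Q` in `d`
variables is arithmetically equivalent to a form `Q' = Uᵗ Q U` whose diagonal
entries satisfy `∏ᵢ q'ᵢᵢ ≤ (4/3)^(d(d-1)/2) · det Q'`. -/
theorem stmt18 (d : ℕ) (Q : Matrix (Fin d) (Fin d) ℝ) (hQ : Q.PosDef) :
    ∃ U : Matrix (Fin d) (Fin d) ℤ, (U.det = 1 ∨ U.det = -1) ∧
      ∏ i, ((castMat U)ᵀ * Q * castMat U) i i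
        ≤ (4 / 3 : ℝ) ^ (d * (d - 1) / 2) * ((castMat U)ᵀ * Q * castMat U).det := by
  obtain ⟨U, hU, hineq⟩ := Hermite.exists_isUnit_det_hermiteInequality hQ
  exact ⟨U, Int.isUnit_iff.1 hU, hineq⟩
end
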